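/- The MIP restriction restricts the feasible region: every assignment (v, y, q, w, ζ) feasible for the MIP restriction (Equation (10)) projects onto an assignment (v, y, q) feasible for the PQ-formulation constraints (1c)–(1j), provided q_{il} is derived as q_{il} = ∑_j v_{ilj} / ∑_{i'} ∑_j v_{i'lj} whenever the denominator is positive (and the path constraints v_{ilj} = q_{il} y_{lj} are then satisfied because each auxiliary pool sends flow to a single output). -/

import Mathlib

/-! Each auxiliary pool `t` sends all its flow to the single output `j` with `ζ t j = 1`, so
`w i t j = ζ t j * γ t * ∑ⱼ v i j`. Summing over `t`, the flow matrix factors as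
`v i j = a j * ∑ⱼ v i j` with `a j = ∑ₜ γ t * ζ t j`, and a matrix of this rank-one shape is
recovered from its row-sum proportions `q` and column sums `y` as `v i j = q i * y j`. -/

open Finset

section BinaryChoice

variable {J R : Type*} [Fintype J] [Semiring R] [CharZero R] {ζ : J → R}

theorem exists_eq_one_forall_ne_eq_zero (hbin : ∀ j, ζ j = 0 ∨ ζ j = 1)
    (hsum : ∑ j, ζ j = 1) : ∃ j₀, ζ j₀ = 1 ∧ ∀ j ≠ j₀, ζ j = 0 := by
  classical
  have hcard : #{j | ζ j = 1} = 1 := by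
    have hite : ∑ j, ζ j = ∑ j, if ζ j = 1 then (1 : R) else 0 :=
      sum_congr rfl fun j _ => by rcases hbin j with h | h <;> simp [h]
    rwa [hite, sum_boole, Nat.cast_eq_one] at hsum
  obtain ⟨j₀, hj₀⟩ := card_eq_one.mp hcard
  have hone : ∀ j, ζ j = 1 ↔ j = j₀ := fun j => by
    simpa using congrArg (j ∈ ·) hj₀
  exact ⟨j₀, (hone j₀).mpr rfl,
    fun j hj => (hbin j).resolve_right fun h => hj ((hone j).mp h)⟩

theorem eq_mul_sum_of_binary_choice {f : J → R} (hbin : ∀ j, ζ j = 0 ∨ ζ j = 1)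
    (hsum : ∑ j, ζ j = 1) (hf : ∀ j, ζ j = 0 → f j = 0) (j : J) :
    f j = ζ j * ∑ j', f j' := by
  obtain ⟨j₀, hj₀, hne⟩ := exists_eq_one_forall_ne_eq_zero hbin hsum
  by_cases hj : j = j₀
  · subst hj
    rw [hj₀, one_mul, sum_eq_single j (fun j' _ hj' => hf j' (hne j' hj')) (by simp)]
  · rw [hne j hj, zero_mul, hf j (hne j hj)]

end BinaryChoice

section RankOne

variable {I J K : Type*} [Fintype I] [Fintype J] [Field K]

theorem eq_rowShare_mul_colSum_of_eq_mul_rowSum {v : I → J → K} {a : J → K}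
    (hv : ∀ i j, v i j = a j * ∑ j', v i j') (hD : ∑ i, ∑ j, v i j ≠ 0) (i : I) (j : J) :
    v i j = (∑ j', v i j') / (∑ i', ∑ j', v i' j') * ∑ i', v i' j := by
  have hcol : ∑ i', v i' j = a j * ∑ i', ∑ j', v i' j' := by
    rw [mul_sum]
    exact sum_congr rfl fun i' _ => hv i' j
  rw [hcol, hv i j]
  field_simp

end RankOne

theorem mip_restriction_gives_pq_feasible_general {I J T : Type*}
    [Fintype I] [Fintype J] [Fintype T]
    (v : I → J → ℝ) (w : I → T → J → ℝ) (ζ : T → J → ℝ)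
    (γ : T → ℝ) (c : J → ℝ) (q : I → ℝ) (y : J → ℝ)
    (hw0 : ∀ (i : I) (t : T) (j : J), 0 ≤ w i t j)
    (hbal : ∀ (i : I) (j : J), v i j = ∑ t : T, w i t j)
    (hfrac : ∀ (i : I) (t : T), ∑ j : J, w i t j = γ t * ∑ j : J, v i j)
    (hbin : ∀ (t : T) (j : J), ζ t j = 0 ∨ ζ t j = 1)
    (hζsum : ∀ t : T, ∑ j : J, ζ t j = 1)
    (hwub : ∀ (i : I) (t : T) (j : J), w i t j ≤ c j * ζ t j)
    (hDpos : 0 < ∑ i : I, ∑ j : J, v i j)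
    (hq : ∀ i : I, q i = (∑ j : J, v i j) / (∑ i' : I, ∑ j : J, v i' j))
    (hy : ∀ j : J, y j = ∑ i : I, v i j) :
    (∀ i : I, 0 ≤ q i) ∧ (∑ i : I, q i) = 1 ∧
    (∀ (i : I) (j : J), v i j = q i * y j) := by
  have hw : ∀ i t j, w i t j = ζ t j * (γ t * ∑ j', v i j') := fun i t j => by
    refine (hfrac i t) ▸ eq_mul_sum_of_binary_choice (hbin t) (hζsum t) (fun j h0 => ?_) j
    exact le_antisymm (by simpa [h0] using hwub i t j) (hw0 i t j)
  have hv : ∀ i j, v i j = (∑ t, γ t * ζ t j) * ∑ j', v i j' := fun i j => by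
    rw [hbal, sum_mul]
    exact sum_congr rfl fun t _ => by rw [hw]; ring
  have hv0 : ∀ i j, 0 ≤ v i j := fun i j => (hbal i j).symm ▸ sum_nonneg fun t _ => hw0 i t j
  refine ⟨fun i => ?_, ?_, fun i j => ?_⟩
  · rw [hq]
    exact div_nonneg (sum_nonneg fun j _ => hv0 i j) hDpos.le
  · simp_rw [hq, ← sum_div, div_self hDpos.ne']
  · rw [hq, hy]
    exact eq_rowShare_mul_colSum_of_eq_mul_rowSum hv hDpos.ne' i j

theorem mip_restriction_gives_pq_feasible {I J T : Type*}
    [Fintype I] [Fintype J] [Fintype T]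
    (v : I → J → ℝ) (w : I → T → J → ℝ) (ζ : T → J → ℝ)
    (γ : T → ℝ) (c : J → ℝ) (q : I → ℝ) (y : J → ℝ)
    (hγ0 : ∀ t : T, 0 ≤ γ t)
    (hγsum : ∑ t : T, γ t = 1)
    (hc : ∀ j : J, 0 ≤ c j)
    (hw0 : ∀ (i : I) (t : T) (j : J), 0 ≤ w i t j)
    (hbal : ∀ (i : I) (j : J), v i j = ∑ t : T, w i t j)
    (hfrac : ∀ (i : I) (t : T), ∑ j : J, w i t j = γ t * ∑ j : J, v i j)
    (hbin : ∀ (t : T) (j : J), ζ t j = 0 ∨ ζ t j = 1)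
    (hζsum : ∀ t : T, ∑ j : J, ζ t j = 1)
    (hwub : ∀ (i : I) (t : T) (j : J), w i t j ≤ c j * ζ t j)
    (hDpos : 0 < ∑ i : I, ∑ j : J, v i j)
    (hq : ∀ i : I, q i = (∑ j : J, v i j) / (∑ i' : I, ∑ j : J, v i' j))
    (hy : ∀ j : J, y j = ∑ i : I, v i j) :
    (∀ i : I, 0 ≤ q i) ∧ (∑ i : I, q i) = 1 ∧
    (∀ (i : I) (j : J), v i j = q i * y j) :=
  mip_restriction_gives_pq_feasible_general v w ζ γ c q y hw0 hbal hfrac hbin hζsum hwub hDpos hq hy
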